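/- arXiv:1902.03058 — 4 statements merged into one kernel-verified Lean document; each statement's English description precedes it below -/
import Mathlib

section
/- Let M be a metric space, x : ℝ → M a function, and V : M → ℝ a continuous function such that V ∘ x is monotone non-decreasing on ℝ. Then V is constant on the ω-limit set of x: for any two points p and q in the ω-limit set of x, V(p) = V(q). -/
/-! A monotone `V ∘ x` has the same supremum along every sequence of times tending to `∞`,
and by continuity this supremum is the value of `V` at any ω-limit point. -/

open Filter Topology

/-- The ω-limit set of a function `x : ℝ → M`: points `p` for which there is a strictly
increasing sequence `t n → ∞` with `x (t n) → p`. -/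
def omegaLimitSet {M : Type*} [MetricSpace M] (x : ℝ → M) : Set M :=
  {p | ∃ t : ℕ → ℝ, StrictMono t ∧ Tendsto t atTop atTop ∧
    Tendsto (fun n => x (t n)) atTop (𝓝 p)}

theorem Monotone.isLUB_range_of_tendsto_comp {α β γ : Type*} [Preorder α] [IsDirectedOrder α]
    [Nonempty α] [Preorder β] [TopologicalSpace γ] [Preorder γ] [OrderClosedTopology γ]
    {f : β → γ} (hf : Monotone f) {g : α → β} (hg_mono : Monotone g)
    (hg : Tendsto g atTop atTop) {a : γ} (ha : Tendsto (f ∘ g) atTop (𝓝 a)) :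
    IsLUB (Set.range f) a := by
  have hlub : IsLUB (Set.range (f ∘ g)) a := isLUB_of_tendsto_atTop (hf.comp hg_mono) ha
  rwa [IsLUB, hf.upperBounds_range_comp_tendsto_atTop hg] at hlub

theorem isLUB_range_comp_of_mem_omegaLimitSet {M : Type*} [MetricSpace M] {x : ℝ → M}
    {V : M → ℝ} (hmono : Monotone (V ∘ x)) {p : M} (hV : ContinuousAt V p)
    (hp : p ∈ omegaLimitSet x) : IsLUB (Set.range (V ∘ x)) (V p) := by
  obtain ⟨t, ht_mono, ht_top, ht_lim⟩ := hp
  exact hmono.isLUB_range_of_tendsto_comp ht_mono.monotone ht_top (hV.tendsto.comp ht_lim)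

/-- If `V` is continuous and non-decreasing along `x`, then `V` is constant on the
ω-limit set of `x`. -/
theorem stmt_0 {M : Type*} [MetricSpace M] (x : ℝ → M) (V : M → ℝ)
    (hV : Continuous V) (hmono : Monotone (V ∘ x))
    (p q : M) (hp : p ∈ omegaLimitSet x) (hq : q ∈ omegaLimitSet x) :
    V p = V q :=
  (isLUB_range_comp_of_mem_omegaLimitSet hmono hV.continuousAt hp).unique
    (isLUB_range_comp_of_mem_omegaLimitSet hmono hV.continuousAt hq)
end

section
/- Let E be a real normed vector space and x : ℝ → E a differentiable function such that ‖x'(t)‖ → 0 as t → ∞. Let (t_n) be a strictly increasing sequence of real numbers tending to ∞ and p ∈ E such that x(t_n) → p as n → ∞. Then for every ε ∈ ℝ, x(t_n + ε) → p as n → ∞. -/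
open Filter Topology

/-! By the mean value inequality, `‖x (s + ε) - x s‖ ≤ |ε| · sup ‖x'‖` over `[s - |ε|, s + |ε|]`,
which tends to `0` as `s → ∞`; then evaluate along `s = t n`. -/

theorem tendsto_sub_comp_add_atTop_of_tendsto_norm_deriv {E : Type*} [NormedAddCommGroup E]
    [NormedSpace ℝ E] {f f' : ℝ → E} (hf : ∀ᶠ u in atTop, HasDerivAt f (f' u) u)
    (hf' : Tendsto (fun u => ‖f' u‖) atTop (𝓝 0)) (ε : ℝ) :
    Tendsto (fun s => f (s + ε) - f s) atTop (𝓝 0) := by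
  rw [NormedAddGroup.tendsto_nhds_zero]
  intro δ hδ
  set C := δ / (|ε| + 1)
  have hC : 0 < C := by positivity
  have hCε : C * |ε| < δ := by
    rw [div_mul_eq_mul_div, div_lt_iff₀ (by positivity)]
    linarith
  obtain ⟨T, hT⟩ := (hf.and (hf'.eventually (eventually_le_nhds hC))).exists_forall_of_atTop
  filter_upwards [eventually_ge_atTop (T + |ε|)] with s hs
  have hmvt : ‖f (s + ε) - f s‖ ≤ C * ‖s + ε - s‖ :=
    (convex_Ici T).norm_image_sub_le_of_norm_hasDerivWithin_le
      (fun u hu => (hT u hu).1.hasDerivWithinAt) (fun u hu => (hT u hu).2)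
      (show T ≤ s by linarith [abs_nonneg ε]) (show T ≤ s + ε by linarith [neg_abs_le ε])
  rw [add_sub_cancel_left, Real.norm_eq_abs] at hmvt
  exact hmvt.trans_lt hCε

theorem stmt_2_general {E : Type*} [NormedAddCommGroup E] [NormedSpace ℝ E]
    (x : ℝ → E) (x' : ℝ → E) (hderiv : ∀ t, HasDerivAt x (x' t) t)
    (hlim : Tendsto (fun t => ‖x' t‖) atTop (𝓝 0))
    (t : ℕ → ℝ) (htlim : Tendsto t atTop atTop)
    (p : E) (hp : Tendsto (fun n => x (t n)) atTop (𝓝 p)) :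
    ∀ ε : ℝ, Tendsto (fun n => x (t n + ε)) atTop (𝓝 p) := by
  intro ε
  have hshift := (tendsto_sub_comp_add_atTop_of_tendsto_norm_deriv
    (Eventually.of_forall hderiv) hlim ε).comp htlim
  simpa using hp.add hshift

/-- If `x : ℝ → E` is differentiable with `‖x' t‖ → 0` as `t → ∞`, and `x (t n) → p`
along a strictly increasing sequence `t n → ∞`, then `x (t n + ε) → p` for every `ε`. -/
theorem stmt_2 {E : Type*} [NormedAddCommGroup E] [NormedSpace ℝ E]
    (x : ℝ → E) (x' : ℝ → E) (hderiv : ∀ t, HasDerivAt x (x' t) t)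
    (hlim : Tendsto (fun t => ‖x' t‖) atTop (𝓝 0))
    (t : ℕ → ℝ) (ht : StrictMono t) (htlim : Tendsto t atTop atTop)
    (p : E) (hp : Tendsto (fun n => x (t n)) atTop (𝓝 p)) :
    ∀ ε : ℝ, Tendsto (fun n => x (t n + ε)) atTop (𝓝 p) :=
  stmt_2_general x x' hderiv hlim t htlim p hp
end

section
/- Let n be a positive natural number and A₁, …, A_m ∈ M_n(ℝ) matrices such that the real linear span of { (ad A₁)^p (A_k) : p ∈ ℕ, 1 ≤ k ≤ m } is all of M_n(ℝ). Then for every T > 0 and every invertible matrix x_∞ ∈ M_n(ℝ), there exist smooth T-periodic functions u₁, …, u_m : ℝ → ℝ and a smooth T-periodic curve x_r : ℝ → M_n(ℝ) with x_r(t) invertible for every t, such that x_r(0) = x_∞, x_r'(t) = x_r(t)·(Σ_{k=1}^m u_k(t) A_k) for all t, and the real linear span of { x_r(t)·A_k·x_r(t)⁻¹ : t ∈ ℝ, 1 ≤ k ≤ m } is all of M_n(ℝ). -/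
attribute [local instance] Matrix.normedAddCommGroup Matrix.normedSpace

open Filter Topology

open NormedSpace

variable {n : ℕ}

noncomputable def psiLin (n : ℕ) : ((Fin n → ℝ) →L[ℝ] (Fin n → ℝ)) →ₗ[ℝ] Matrix (Fin n) (Fin n) ℝ :=
  (LinearMap.toMatrix' : ((Fin n → ℝ) →ₗ[ℝ] (Fin n → ℝ)) ≃ₗ[ℝ] _).toLinearMap ∘ₗ
    ContinuousLinearMap.coeLM ℝ

noncomputable def psiC (n : ℕ) : ((Fin n → ℝ) →L[ℝ] (Fin n → ℝ)) →L[ℝ] Matrix (Fin n) (Fin n) ℝ :=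
  LinearMap.toContinuousLinearMap (psiLin n)

noncomputable def matC (B : Matrix (Fin n) (Fin n) ℝ) : (Fin n → ℝ) →L[ℝ] (Fin n → ℝ) :=
  LinearMap.toContinuousLinearMap (Matrix.toLin' B)

lemma psiLin_matC (B : Matrix (Fin n) (Fin n) ℝ) : psiLin n (matC B) = B := by
  simp [psiLin, matC, LinearMap.toMatrix'_toLin']

lemma psiLin_mul (X Y : (Fin n → ℝ) →L[ℝ] (Fin n → ℝ)) :
    psiLin n (X * Y) = psiLin n X * psiLin n Y := by
  simp only [psiLin, LinearMap.coe_comp, Function.comp_apply, ContinuousLinearMap.coeLM_apply,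
    ContinuousLinearMap.mul_def, ContinuousLinearMap.coe_comp]
  exact LinearMap.toMatrix'_comp _ _

lemma psiLin_one : psiLin n (1 : (Fin n → ℝ) →L[ℝ] (Fin n → ℝ)) = 1 := by
  simp only [psiLin, LinearMap.coe_comp, Function.comp_apply, ContinuousLinearMap.coeLM_apply,
    ContinuousLinearMap.one_def, ContinuousLinearMap.coe_id]
  exact LinearMap.toMatrix'_id

lemma exp_contDiff : ContDiff ℝ (⊤ : ℕ∞) (exp : ((Fin n → ℝ) →L[ℝ] (Fin n → ℝ)) → _) :=
  contDiff_iff_contDiffAt.2 fun x => (exp_analytic (𝕂 := ℝ) x).contDiffAt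

lemma mem_of_hasDerivAt_mem {E : Type*} [NormedAddCommGroup E] [NormedSpace ℝ E]
    [FiniteDimensional ℝ E]
    (V : Submodule ℝ E) (f f' : ℝ → E) (hf : ∀ s, HasDerivAt f (f' s) s)
    (hmem : ∀ s ∈ Set.Ioo (-1:ℝ) 1, f s ∈ V) :
    ∀ s ∈ Set.Ioo (-1:ℝ) 1, f' s ∈ V := by
  intro s hs
  have hcl : IsClosed (V : Set E) := Submodule.closed_of_finiteDimensional V
  have ht : Tendsto (slope f s) (𝓝[≠] s) (𝓝 (f' s)) := hasDerivAt_iff_tendsto_slope.1 (hf s)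
  refine hcl.mem_of_tendsto ht ?_
  have hIoo : Set.Ioo (-1:ℝ) 1 ∈ 𝓝[≠] s := nhdsWithin_le_nhds (isOpen_Ioo.mem_nhds hs)
  filter_upwards [hIoo] with y hy
  rw [slope_def_module]
  exact V.smul_mem _ (V.sub_mem (hmem y hy) (hmem s hs))

section AlgebraSide

variable {𝔸 : Type*} [NormedRing 𝔸] [NormedAlgebra ℝ 𝔸] [CompleteSpace 𝔸]

lemma exp_mul_exp_neg (a : 𝔸) (s : ℝ) : exp (s • a) * exp ((-s) • a) = 1 := by
  letI : NormedAlgebra ℚ 𝔸 := NormedAlgebra.restrictScalars ℚ ℝ 𝔸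
  rw [← exp_add_of_commute (((Commute.refl a).smul_left s).smul_right (-s))]
  rw [← add_smul, add_neg_cancel, zero_smul, exp_zero]

lemma hasDerivAt_conj_exp (a b : 𝔸) (s : ℝ) :
    HasDerivAt (fun s : ℝ => exp (s • a) * b * exp ((-s) • a))
      (a * (exp (s • a) * b * exp ((-s) • a))
        - (exp (s • a) * b * exp ((-s) • a)) * a) s := by
  have h1 : HasDerivAt (fun s : ℝ => exp (s • a)) (exp (s • a) * a) s :=
    hasDerivAt_exp_smul_const a s
  have h2 : HasDerivAt (fun s : ℝ => exp ((-s) • a))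
      ((-1 : ℝ) • (exp ((-s) • a) * a)) s :=
    (hasDerivAt_exp_smul_const a (-s)).scomp s (hasDerivAt_neg s)
  have h3 := (h1.mul_const b).mul h2
  convert h3 using 1
  · rfl
  have hc : exp (s • a) * a = a * exp (s • a) :=
    ((((Commute.refl a).smul_right s).exp_right)).symm.eq
  rw [hc]
  simp [mul_assoc, sub_eq_add_neg]

lemma iterate_ad_mem [FiniteDimensional ℝ 𝔸] (a : 𝔸) (f : ℝ → 𝔸)
    (hf : ∀ s, HasDerivAt f (a * f s - f s * a) s) (V : Submodule ℝ 𝔸)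
    (hmem : ∀ s ∈ Set.Ioo (-1:ℝ) 1, f s ∈ V) :
    ∀ p, ∀ s ∈ Set.Ioo (-1:ℝ) 1, (fun X => a * X - X * a)^[p] (f s) ∈ V := by
  set adl : 𝔸 →ₗ[ℝ] 𝔸 := LinearMap.mulLeft ℝ a - LinearMap.mulRight ℝ a with hadl
  set adC : 𝔸 →L[ℝ] 𝔸 := LinearMap.toContinuousLinearMap adl with hadC
  have hadC_apply : ∀ X, adC X = a * X - X * a := by
    intro X
    simp [hadC, hadl]
  have hfun : (fun X : 𝔸 => a * X - X * a) = ⇑adC := funext fun X => (hadC_apply X).symm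
  rw [hfun]
  have key : ∀ p, (∀ s, HasDerivAt (fun s => adC^[p] (f s)) (adC^[p+1] (f s)) s)
      ∧ (∀ s ∈ Set.Ioo (-1:ℝ) 1, adC^[p] (f s) ∈ V) := by
    intro p
    induction p with
    | zero =>
      refine ⟨fun s => ?_, fun s hs => by simpa using hmem s hs⟩
      simpa [hadC_apply] using hf s
    | succ p ih =>
      constructor
      · intro s
        have := adC.hasFDerivAt.comp_hasDerivAt s (ih.1 s)
        simpa [Function.iterate_succ_apply', Function.comp_def] using this
      · exact mem_of_hasDerivAt_mem V _ _ ih.1 ih.2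
  exact fun p => (key p).2

end AlgebraSide


noncomputable def phiP (T t : ℝ) : ℝ := Real.sin (2 * Real.pi / T * t)
noncomputable def psifP (T t : ℝ) : ℝ := Real.cos (2 * Real.pi / T * t) * (2 * Real.pi / T)

set_option maxHeartbeats 1000000 in
/-- Existence of regular periodic trajectories for the right-invariant driftless matrix
system `x' = x · Σ u_k A_k`: if the span of `{ (ad A₁)^p A_k }` is all of `Mₙ(ℝ)`, then
through every invertible `x_∞` and for every period `T > 0` there is a smooth `T`-periodic
trajectory `x_r` with smooth `T`-periodic controls such that
`span { x_r(t)·A_k·x_r(t)⁻¹ } = Mₙ(ℝ)`. -/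
theorem stmt_14 (n : ℕ) (hn : 0 < n) (m : ℕ) (hm : 0 < m)
    (A : Fin m → Matrix (Fin n) (Fin n) ℝ)
    (hspan : Submodule.span ℝ
      {B : Matrix (Fin n) (Fin n) ℝ | ∃ (p : ℕ) (k : Fin m),
        B = (fun C => A ⟨0, hm⟩ * C - C * A ⟨0, hm⟩)^[p] (A k)} = ⊤)
    (T : ℝ) (hT : 0 < T)
    (xinf : Matrix (Fin n) (Fin n) ℝ) (hxinf : IsUnit xinf) :
    ∃ (u : Fin m → ℝ → ℝ) (xr : ℝ → Matrix (Fin n) (Fin n) ℝ),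
      (∀ k, ContDiff ℝ (⊤ : ℕ∞) (u k)) ∧
      (∀ k t, u k (t + T) = u k t) ∧
      ContDiff ℝ (⊤ : ℕ∞) xr ∧
      (∀ t, xr (t + T) = xr t) ∧
      (∀ t, IsUnit (xr t)) ∧
      xr 0 = xinf ∧
      (∀ t : ℝ, HasDerivAt xr (xr t * ∑ k, u k t • A k) t) ∧
      Submodule.span ℝ
        {B : Matrix (Fin n) (Fin n) ℝ | ∃ (t : ℝ) (k : Fin m),
          B = xr t * A k * (xr t)⁻¹} = ⊤ := by
  classical
  set k0 : Fin m := ⟨0, hm⟩ with hk0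
  set a : (Fin n → ℝ) →L[ℝ] (Fin n → ℝ) := matC (A k0) with ha
  set φ : ℝ → ℝ := phiP T with hφ
  set ψf : ℝ → ℝ := psifP T with hψf
  have hTne : T ≠ 0 := hT.ne'
  -- derivative of φ
  have hφd : ∀ t, HasDerivAt φ (ψf t) t := by
    intro t
    have hlin : HasDerivAt (fun t : ℝ => 2 * Real.pi / T * t) (2 * Real.pi / T) t := by
      simpa using (hasDerivAt_id t).const_mul (2 * Real.pi / T)
    exact (Real.hasDerivAt_sin _).comp t hlin
  -- periodicity
  have harg : ∀ t : ℝ, 2 * Real.pi / T * (t + T) = 2 * Real.pi / T * t + 2 * Real.pi := by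
    intro t; field_simp
  have hφper : ∀ t, φ (t + T) = φ t := by
    intro t; simp only [hφ, phiP, harg, Real.sin_add_two_pi]
  have hψfper : ∀ t, ψf (t + T) = ψf t := by
    intro t; simp only [hψf, psifP, harg, Real.cos_add_two_pi]
  -- algebra facts
  have hdet : IsUnit xinf.det := (Matrix.isUnit_iff_isUnit_det xinf).1 hxinf
  have hx1 : xinf * xinf⁻¹ = 1 := Matrix.mul_nonsing_inv _ hdet
  have hx2 : xinf⁻¹ * xinf = 1 := Matrix.nonsing_inv_mul _ hdet
  have hψinv : ∀ s : ℝ, psiLin n (exp (s • a)) * psiLin n (exp ((-s) • a)) = 1 := by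
    intro s
    rw [← psiLin_mul, exp_mul_exp_neg a s, psiLin_one]
  refine ⟨fun k t => if k = k0 then ψf t else 0,
    fun t => xinf * psiLin n (exp (φ t • a)), ?_, ?_, ?_, ?_, ?_, ?_, ?_, ?_⟩
  · -- smoothness of controls
    intro k
    by_cases hk : k = k0
    · simp only [hk, if_pos rfl]
      exact (Real.contDiff_cos.comp (contDiff_const.mul contDiff_id)).mul contDiff_const
    · simp only [if_neg hk]
      exact contDiff_const
  · intro k t
    simp only [hψfper]
  · -- smoothness of xr
    have hφcd : ContDiff ℝ (⊤ : ℕ∞) φ :=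
      Real.contDiff_sin.comp (contDiff_const.mul contDiff_id)
    have hecd : ContDiff ℝ (⊤ : ℕ∞) (fun t => exp (φ t • a)) :=
      exp_contDiff.comp (hφcd.smul contDiff_const)
    have h1 : ContDiff ℝ (⊤ : ℕ∞) (fun t => psiC n (exp (φ t • a))) :=
      (psiC n).contDiff.comp hecd
    have h2 := (LinearMap.toContinuousLinearMap (LinearMap.mulLeft ℝ xinf)).contDiff.comp h1
    exact h2
  · -- periodicity of xr
    intro t; simp only [hφper]
  · -- invertibility
    intro t
    refine ⟨⟨xinf * psiLin n (exp (φ t • a)),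
      psiLin n (exp ((-φ t) • a)) * xinf⁻¹, ?_, ?_⟩, rfl⟩
    · rw [mul_assoc, ← mul_assoc (psiLin n (exp (φ t • a))), hψinv (φ t), one_mul, hx1]
    · have h5 := hψinv (-(φ t))
      rw [neg_neg] at h5
      rw [mul_assoc, ← mul_assoc xinf⁻¹, hx2, one_mul, h5]
  · -- initial condition
    have h0 : φ 0 = 0 := by simp [hφ, phiP]
    simp only [h0, zero_smul, exp_zero, psiLin_one, mul_one]
  · -- the ODE
    intro t
    have h1 : HasDerivAt (fun s : ℝ => exp (s • a)) (exp (φ t • a) * a) (φ t) :=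
      hasDerivAt_exp_smul_const a (φ t)
    have h2 : HasDerivAt (fun t => exp (φ t • a)) (ψf t • (exp (φ t • a) * a)) t :=
      h1.scomp t (hφd t)
    have h3 := (psiC n).hasFDerivAt.comp_hasDerivAt t h2
    have h4 := (LinearMap.toContinuousLinearMap
      (LinearMap.mulLeft ℝ xinf)).hasFDerivAt.comp_hasDerivAt t h3
    have hfun : (⇑(LinearMap.toContinuousLinearMap (LinearMap.mulLeft ℝ xinf)) ∘ ⇑(psiC n)
          ∘ fun t => exp (φ t • a))
        = fun t => xinf * psiLin n (exp (φ t • a)) := by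
      funext t; simp [psiC]
    rw [hfun] at h4
    have hsum : ∑ k, (if k = k0 then ψf t else 0) • A k = ψf t • A k0 := by
      simp [ite_smul, Finset.sum_ite_eq']
    convert h4 using 1
    show (xinf * psiLin n (exp (φ t • a))) * ∑ k, (if k = k0 then ψf t else 0) • A k = _
    rw [hsum]
    simp only [psiC, LinearMap.coe_toContinuousLinearMap', LinearMap.mulLeft_apply,
      map_smul, psiLin_mul, ha, psiLin_matC, mul_smul_comm, smul_mul_assoc, mul_assoc]
    change ψf t • (xinf * (psiLin n (exp (φ t • matC (A k0))) * A k0))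
      = xinf * psiLin n (ψf t • (exp (φ t • matC (A k0)) * matC (A k0)))
    rw [map_smul, psiLin_mul, psiLin_matC, mul_smul_comm]
    all_goals rfl
  · -- the span condition
    set W := Submodule.span ℝ
        {B : Matrix (Fin n) (Fin n) ℝ | ∃ (t : ℝ) (k : Fin m),
          B = (fun t => xinf * psiLin n (exp (φ t • a))) t * A k
            * ((fun t => xinf * psiLin n (exp (φ t • a))) t)⁻¹} with hW
    set cψ : ((Fin n → ℝ) →L[ℝ] (Fin n → ℝ)) →ₗ[ℝ] Matrix (Fin n) (Fin n) ℝ :=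
      (LinearMap.mulRight ℝ xinf⁻¹) ∘ₗ (LinearMap.mulLeft ℝ xinf) ∘ₗ (psiLin n) with hcψ
    have hcψ_apply : ∀ X, cψ X = xinf * psiLin n X * xinf⁻¹ := fun X => rfl
    set V : Submodule ℝ ((Fin n → ℝ) →L[ℝ] (Fin n → ℝ)) := W.comap cψ with hV
    have hxr_inv : ∀ t, ((fun t => xinf * psiLin n (exp (φ t • a))) t)⁻¹
        = psiLin n (exp ((-φ t) • a)) * xinf⁻¹ := by
      intro t
      apply Matrix.inv_eq_right_inv
      rw [mul_assoc, ← mul_assoc (psiLin n (exp (φ t • a))), hψinv (φ t), one_mul, hx1]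
    -- base membership
    have hrmem : ∀ k : Fin m, ∀ s ∈ Set.Ioo (-1:ℝ) 1,
        exp (s • a) * matC (A k) * exp ((-s) • a) ∈ V := by
      intro k s hs
      set t : ℝ := T / (2 * Real.pi) * Real.arcsin s with ht
      have hφt : φ t = s := by
        have harg2 : 2 * Real.pi / T * (T / (2 * Real.pi) * Real.arcsin s) = Real.arcsin s := by
          field_simp
        simp only [hφ, phiP, ht, harg2]
        exact Real.sin_arcsin hs.1.le hs.2.le
      simp only [hV, Submodule.mem_comap]
      apply Submodule.subset_span
      refine ⟨t, k, ?_⟩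
      rw [hxr_inv t, hφt, hcψ_apply]
      simp only [psiLin_mul, psiLin_matC]
      rw [hφt]
      simp [mul_assoc]
    have hrd : ∀ (k : Fin m) (s : ℝ),
        HasDerivAt (fun s : ℝ => exp (s • a) * matC (A k) * exp ((-s) • a))
          (a * (exp (s • a) * matC (A k) * exp ((-s) • a))
            - (exp (s • a) * matC (A k) * exp ((-s) • a)) * a) s :=
      fun k s => hasDerivAt_conj_exp a (matC (A k)) s
    have hiter : ∀ (k : Fin m) (p : ℕ), ∀ s ∈ Set.Ioo (-1:ℝ) 1,
        (fun X => a * X - X * a)^[p]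
          (exp (s • a) * matC (A k) * exp ((-s) • a)) ∈ V := by
      intro k p
      exact iterate_ad_mem a (fun s : ℝ => exp (s • a) * matC (A k) * exp ((-s) • a))
        (hrd k) V (hrmem k) p
    have hr0 : ∀ k : Fin m,
        exp ((0:ℝ) • a) * matC (A k) * exp ((-(0:ℝ)) • a) = matC (A k) := by
      intro k; simp [exp_zero]
    have hV0 : ∀ (p : ℕ) (k : Fin m), (fun X => a * X - X * a)^[p] (matC (A k)) ∈ V := by
      intro p k
      have h6 := hiter k p 0 (by constructor <;> norm_num)
      rwa [hr0 k] at h6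
    -- push through psiLin
    have hψad : ∀ (p : ℕ) (X : (Fin n → ℝ) →L[ℝ] (Fin n → ℝ)),
        psiLin n ((fun X => a * X - X * a)^[p] X)
          = (fun C => A k0 * C - C * A k0)^[p] (psiLin n X) := by
      intro p
      induction p with
      | zero => intro X; rfl
      | succ p ih =>
        intro X
        rw [Function.iterate_succ_apply', Function.iterate_succ_apply', ← ih]
        simp only [map_sub, psiLin_mul, ha, psiLin_matC]
    have hconj_mem : ∀ (p : ℕ) (k : Fin m),
        xinf * ((fun C => A k0 * C - C * A k0)^[p] (A k)) * xinf⁻¹ ∈ W := by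
      intro p k
      have h := hV0 p k
      simp only [hV, Submodule.mem_comap, hcψ_apply] at h
      rwa [hψad p, psiLin_matC] at h
    -- conclude
    set cM : Matrix (Fin n) (Fin n) ℝ →ₗ[ℝ] Matrix (Fin n) (Fin n) ℝ :=
      (LinearMap.mulRight ℝ xinf⁻¹) ∘ₗ (LinearMap.mulLeft ℝ xinf) with hcM
    have hmap : Submodule.map cM (Submodule.span ℝ
        {B : Matrix (Fin n) (Fin n) ℝ | ∃ (p : ℕ) (k : Fin m),
          B = (fun C => A ⟨0, hm⟩ * C - C * A ⟨0, hm⟩)^[p] (A k)}) ≤ W := by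
      rw [Submodule.map_span]
      apply Submodule.span_le.2
      rintro y ⟨B, ⟨p, k, rfl⟩, rfl⟩
      exact hconj_mem p k
    rw [hspan] at hmap
    rw [eq_top_iff]
    intro B _
    apply hmap
    refine ⟨xinf⁻¹ * B * xinf, Submodule.mem_top, ?_⟩
    show xinf * (xinf⁻¹ * B * xinf) * xinf⁻¹ = B
    rw [← mul_assoc, ← mul_assoc, hx1, one_mul, mul_assoc, hx1, mul_one]
end

section
/- Let n be a positive natural number, A₁, …, A_m ∈ M_n(ℂ), and let u₁ʳ, …, u_mʳ, v₁, …, v_m : ℝ → ℝ. Let x_r : ℝ → M_n(ℂ) be differentiable with x_r(t) invertible for all t and x_r'(t) = x_r(t)·(Σ_{k=1}^m u_kʳ(t) A_k), and let z : ℝ → M_n(ℂ) be differentiable with z(t) invertible for all t and z'(t) = Σ_{k=1}^m v_k(t)·z(t)·x_r(t)·A_k·x_r(t)⁻¹. Set x_∞ = x_r(0) and suppose z(0) = x₀·x_∞⁻¹ for a given invertible x₀ and that z(t) → 1 as t → ∞. Then x(t) := z(t)·x_r(t) satisfies x'(t) = x(t)·(Σ_{k=1}^m (v_k(t) + u_kʳ(t))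 A_k) for all t, x(0) = x₀, and x(t)·x_r(t)⁻¹ → 1 as t → ∞. -/
attribute [local instance] Matrix.normedAddCommGroup Matrix.normedSpace

open Filter Topology

/-!
Differentiating `x = z · x_r` by the product rule gives
`x' = z · x_r · V · x_r⁻¹ · x_r + z · x_r · U = x · (V + U)` with `U = Σ u_kʳ A_k` and
`V = Σ v_k A_k`: the conjugation by `x_r` in the equation for `z` is exactly what makes the two
terms combine. The initial value and the limit follow from `x · x_r⁻¹ = z`.
-/

namespace Matrix

variable {ι : Type*} [Fintype ι]

theorem hasDerivAt_mul {f g : ℝ → Matrix ι ι ℂ} {f' g' : Matrix ι ι ℂ} {t : ℝ}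
    (hf : HasDerivAt f f' t) (hg : HasDerivAt g g' t) :
    HasDerivAt (fun s => f s * g s) (f' * g t + f t * g') t := by
  have h : HasDerivAt (fun s => f s * g s) (f t * g' + f' * g t) t := hasDerivWithinAt_univ.mp <|
    (LinearMap.mul ℝ (Matrix ι ι ℂ)).toContinuousBilinearMap.hasDerivWithinAt_of_bilinear
      hf.hasDerivWithinAt hg.hasDerivWithinAt
  rwa [add_comm] at h

variable [DecidableEq ι]

theorem hasDerivAt_mul_of_hasDerivAt_conj {xr z : ℝ → Matrix ι ι ℂ} {U V : Matrix ι ι ℂ} {t : ℝ}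
    (hxrinv : IsUnit (xr t).det) (hxr : HasDerivAt xr (xr t * U) t)
    (hz : HasDerivAt z (z t * (xr t * V * (xr t)⁻¹)) t) :
    HasDerivAt (fun s => z s * xr s) (z t * xr t * (V + U)) t := by
  convert hasDerivAt_mul hz hxr using 1
  rw [Matrix.mul_assoc (z t) (xr t * V * _), nonsing_inv_mul_cancel_right _ _ hxrinv]
  noncomm_ring

end Matrix

theorem stmt_15_general (n : ℕ) (m : ℕ)
    (A : Fin m → Matrix (Fin n) (Fin n) ℂ)
    (u v : Fin m → ℝ → ℝ)
    (xr z : ℝ → Matrix (Fin n) (Fin n) ℂ)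
    (hxrinv : ∀ t, IsUnit (xr t))
    (hxr : ∀ t : ℝ, HasDerivAt xr (xr t * ∑ k, u k t • A k) t)
    (hz : ∀ t : ℝ, HasDerivAt z (∑ k, v k t • (z t * (xr t * A k * (xr t)⁻¹))) t)
    (x₀ : Matrix (Fin n) (Fin n) ℂ)
    (hz0 : z 0 = x₀ * (xr 0)⁻¹)
    (hzlim : Tendsto z atTop (𝓝 1)) :
    (∀ t : ℝ, HasDerivAt (fun s => z s * xr s)
      ((z t * xr t) * ∑ k, (v k t + u k t) • A k) t) ∧
    z 0 * xr 0 = x₀ ∧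
    Tendsto (fun t => (z t * xr t) * (xr t)⁻¹) atTop (𝓝 1) := by
  have hdet : ∀ t, IsUnit (xr t).det := fun t => (Matrix.isUnit_iff_isUnit_det _).mp (hxrinv t)
  refine ⟨fun t => ?_, ?_, ?_⟩
  · have hz' : HasDerivAt z (z t * (xr t * (∑ k, v k t • A k) * (xr t)⁻¹)) t := by
      simpa only [Finset.mul_sum, Finset.sum_mul, Matrix.mul_smul, Matrix.smul_mul] using hz t
    simpa only [add_smul, Finset.sum_add_distrib] using
      Matrix.hasDerivAt_mul_of_hasDerivAt_conj (hdet t) (hxr t) hz'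
  · rw [hz0, Matrix.nonsing_inv_mul_cancel_right _ _ (hdet 0)]
  · exact hzlim.congr fun t => (Matrix.mul_nonsing_inv_cancel_right _ _ (hdet t)).symm

/-- Reduction of the periodic trajectory tracking problem to a stabilization problem,
matrix-group instance: if `x_r' = x_r · Σ u_kʳ A_k`, `z' = Σ v_k · z · x_r A_k x_r⁻¹`,
`z 0 = x₀ · (x_r 0)⁻¹` and `z t → 1`, then `x := z · x_r` solves
`x' = x · Σ (v_k + u_kʳ) A_k`, `x 0 = x₀` and `x t · (x_r t)⁻¹ → 1`. -/
theorem stmt_15 (n : ℕ) (hn : 0 < n) (m : ℕ)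
    (A : Fin m → Matrix (Fin n) (Fin n) ℂ)
    (u v : Fin m → ℝ → ℝ)
    (xr z : ℝ → Matrix (Fin n) (Fin n) ℂ)
    (hxrinv : ∀ t, IsUnit (xr t))
    (hzinv : ∀ t, IsUnit (z t))
    (hxr : ∀ t : ℝ, HasDerivAt xr (xr t * ∑ k, u k t • A k) t)
    (hz : ∀ t : ℝ, HasDerivAt z (∑ k, v k t • (z t * (xr t * A k * (xr t)⁻¹))) t)
    (x₀ : Matrix (Fin n) (Fin n) ℂ) (hx₀ : IsUnit x₀)
    (hz0 : z 0 = x₀ * (xr 0)⁻¹)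
    (hzlim : Tendsto z atTop (𝓝 1)) :
    (∀ t : ℝ, HasDerivAt (fun s => z s * xr s)
      ((z t * xr t) * ∑ k, (v k t + u k t) • A k) t) ∧
    z 0 * xr 0 = x₀ ∧
    Tendsto (fun t => (z t * xr t) * (xr t)⁻¹) atTop (𝓝 1) :=
  stmt_15_general n m A u v xr z hxrinv hxr hz x₀ hz0 hzlim
end
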